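/- arXiv:1606.07717 — 2 statements merged into one kernel-verified Lean document; each statement's English description precedes it below -/
import Mathlib

section
/- (PDE part of Theorem 1.) Let k_f, k_b, k_d ≥ 0, let α, β, γ be pairwise distinct real numbers satisfying the characteristic system for parameters k_f, k_b, k_d, and let r0 > 1. Then the Green's function P(r,t) satisfies ∂P/∂t(r,t) = ∂²P/∂r²(r,t) + (2/r)·∂P/∂r(r,t) − k_d·P(r,t) for all r > 1 and all t > 0. -/
/-!
Since `Δ(v/r) = (∂ᵣ²v)/r` for radial functions in ℝ³, `P = exp(-k_d t) · v(r,t) / r` solves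
`∂ₜP = ∂ᵣ²P + (2/r)∂ᵣP − k_d P` as soon as `v` solves the one-dimensional heat equation
`∂ₜv = ∂ᵣ²v`. For the Green's function, `v` is a linear combination of Gaussians
`exp(-x²/(4t))/√t` and of the functions `W(x/(2√t), a√t) = exp(a x + a² t) · erfc(x/(2√t) + a√t)`,
each of which solves the heat equation for every real `a`.
-/

/-- The complementary error function `erfc(x) = (2/√π)·∫_x^∞ exp(−u²) du`. -/
noncomputable def erfc (x : ℝ) : ℝ :=
  (2 / Real.sqrt Real.pi) * ∫ u in Set.Ioi x, Real.exp (-u ^ 2)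

/-- `W(n,m) = exp(2·n·m + m²)·erfc(n+m)`. -/
noncomputable def W (n m : ℝ) : ℝ :=
  Real.exp (2 * n * m + m ^ 2) * erfc (n + m)

/-- `η₁ = α(γ+α)(α+β)/((γ−α)(α−β))`. -/
noncomputable def eta1 (α β γ : ℝ) : ℝ := α * (γ + α) * (α + β) / ((γ - α) * (α - β))

/-- `η₂ = β(γ+β)(α+β)/((β−γ)(α−β))`. -/
noncomputable def eta2 (α β γ : ℝ) : ℝ := β * (γ + β) * (α + β) / ((β - γ) * (α - β))

/-- `η₃ = γ(γ+β)(α+γ)/((β−γ)(γ−α))`. -/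
noncomputable def eta3 (α β γ : ℝ) : ℝ := γ * (γ + β) * (α + γ) / ((β - γ) * (γ - α))

/-- The Green's function of the reactive-receiver diffusion channel (Theorem 1):
`P(r,t) = exp(−k_d·t)·[ (1/(8π·r·r0·√(π·t)))·( exp(−(r−r0)²/(4t)) + exp(−(r+r0−2)²/(4t)) )
  − (1/(4π·r·r0))·( η₁·W((r+r0−2)/(2√t), α√t) + η₂·W((r+r0−2)/(2√t), β√t)
  + η₃·W((r+r0−2)/(2√t), γ√t) ) ]`. -/
noncomputable def greenP (k_d r0 α β γ : ℝ) (r t : ℝ) : ℝ :=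
  Real.exp (-k_d * t) *
    ((1 / (8 * Real.pi * r * r0 * Real.sqrt (Real.pi * t))) *
        (Real.exp (-(r - r0) ^ 2 / (4 * t)) + Real.exp (-(r + r0 - 2) ^ 2 / (4 * t)))
      - (1 / (4 * Real.pi * r * r0)) *
        (eta1 α β γ * W ((r + r0 - 2) / (2 * Real.sqrt t)) (α * Real.sqrt t)
          + eta2 α β γ * W ((r + r0 - 2) / (2 * Real.sqrt t)) (β * Real.sqrt t)
          + eta3 α β γ * W ((r + r0 - 2) / (2 * Real.sqrt t)) (γ * Real.sqrt t)))

open Real MeasureTheory Set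

theorem hasDerivAt_integral_Ioi {E : Type*} [NormedAddCommGroup E] [NormedSpace ℝ E]
    [CompleteSpace E] {f : ℝ → E} (hf : Integrable f) (hcont : Continuous f) (x : ℝ) :
    HasDerivAt (fun y => ∫ u in Ioi y, f u) (-f x) x := by
  have hsplit : (fun y => ∫ u in Ioi y, f u)
      = fun y => (∫ u in Ioi 0, f u) - ∫ u in (0 : ℝ)..y, f u := by
    funext y
    rw [← intervalIntegral.integral_Ioi_sub_Ioi' hf.integrableOn hf.integrableOn, sub_sub_cancel]
  rw [hsplit]
  exact (hcont.integral_hasStrictDerivAt 0 x).hasDerivAt.const_sub _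

theorem hasDerivAt_erfc (x : ℝ) : HasDerivAt erfc (-(2 / √π * exp (-x ^ 2))) x := by
  have hint : Integrable fun u : ℝ => exp (-u ^ 2) := by
    simpa using integrable_exp_neg_mul_sq one_pos
  unfold erfc
  exact ((hasDerivAt_integral_Ioi hint (by fun_prop) x).const_mul (2 / √π)).congr_deriv
    (mul_neg _ _)

def IsHeatSolutionAt (u : ℝ → ℝ → ℝ) (t : ℝ) : Prop :=
  ∃ ux uxx : ℝ → ℝ, ∀ x, HasDerivAt (u · t) (ux x) x ∧ HasDerivAt ux (uxx x) x ∧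
    HasDerivAt (u x ·) (uxx x) t

namespace IsHeatSolutionAt

variable {u v : ℝ → ℝ → ℝ} {t : ℝ}

theorem add (hu : IsHeatSolutionAt u t) (hv : IsHeatSolutionAt v t) :
    IsHeatSolutionAt (fun x t => u x t + v x t) t := by
  obtain ⟨ux, uxx, hu⟩ := hu
  obtain ⟨vx, vxx, hv⟩ := hv
  exact ⟨ux + vx, uxx + vxx, fun x =>
    ⟨(hu x).1.add (hv x).1, (hu x).2.1.add (hv x).2.1, (hu x).2.2.add (hv x).2.2⟩⟩

theorem const_mul (hu : IsHeatSolutionAt u t) (c : ℝ) :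
    IsHeatSolutionAt (fun x t => c * u x t) t := by
  obtain ⟨ux, uxx, hu⟩ := hu
  exact ⟨fun x => c * ux x, fun x => c * uxx x, fun x =>
    ⟨(hu x).1.const_mul c, (hu x).2.1.const_mul c, (hu x).2.2.const_mul c⟩⟩

theorem sub (hu : IsHeatSolutionAt u t) (hv : IsHeatSolutionAt v t) :
    IsHeatSolutionAt (fun x t => u x t - v x t) t := by
  simpa only [neg_one_mul, ← sub_eq_add_neg] using hu.add (hv.const_mul (-1))

theorem comp_sub_const (hu : IsHeatSolutionAt u t) (c : ℝ) :
    IsHeatSolutionAt (fun x t => u (x - c) t) t := by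
  obtain ⟨ux, uxx, hu⟩ := hu
  exact ⟨fun x => ux (x - c), fun x => uxx (x - c), fun x =>
    ⟨(hu (x - c)).1.comp_sub_const x c, (hu (x - c)).2.1.comp_sub_const x c, (hu (x - c)).2.2⟩⟩

theorem radial_reaction_diffusion (hu : IsHeatSolutionAt u t) (k : ℝ) {r : ℝ} (hr : r ≠ 0) :
    deriv (fun t' => exp (-k * t') * u r t' / r) t
      = deriv (fun r' => deriv (fun r'' => exp (-k * t) * u r'' t / r'') r') r
        + (2 / r) * deriv (fun r' => exp (-k * t) * u r' t / r') r
        - k * (exp (-k * t) * u r t / r) := by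
  obtain ⟨ux, uxx, hu⟩ := hu
  set E := exp (-k * t)
  have hPr : ∀ r' ≠ 0, HasDerivAt (fun r'' => E * u r'' t / r'')
      (E * ((ux r' * r' - u r' t) / r' ^ 2)) r' := fun r' hr' =>
    (((hu r').1.const_mul E).div (hasDerivAt_id' r') hr').congr_deriv (by ring)
  have hPrr : HasDerivAt (fun r' => E * ((ux r' * r' - u r' t) / r' ^ 2))
      (E * ((uxx r * r ^ 2 - 2 * (ux r * r - u r t)) / r ^ 3)) r := by
    have hnum := ((hu r).2.1.fun_mul (hasDerivAt_id' r)).fun_sub (hu r).1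
    refine ((hnum.div (hasDerivAt_pow 2 r) (pow_ne_zero 2 hr)).const_mul E).congr_deriv ?_
    field_simp
    ring
  have hPt : HasDerivAt (fun t' => exp (-k * t') * u r t' / r)
      ((E * (-k * 1) * u r t + E * uxx r) / r) t :=
    ((((hasDerivAt_id' t).const_mul (-k)).exp).mul (hu r).2.2).div_const r
  have hPr_near : deriv (fun r'' => E * u r'' t / r'')
      =ᶠ[nhds r] fun r' => E * ((ux r' * r' - u r' t) / r' ^ 2) := by
    filter_upwards [eventually_ne_nhds hr] with r' hr'
    exact (hPr r' hr').deriv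
  rw [hPt.deriv, hPr_near.deriv_eq, hPrr.deriv, (hPr r hr).deriv]
  field_simp
  ring

end IsHeatSolutionAt

noncomputable def heatKernel (x t : ℝ) : ℝ := exp (-x ^ 2 / (4 * t)) / √t

section HeatKernel

variable {t : ℝ} (ht : 0 < t)
include ht

theorem hasDerivAt_heatKernel_space (x : ℝ) :
    HasDerivAt (heatKernel · t) (-x / (2 * t) * heatKernel x t) x := by
  have hexp := (((hasDerivAt_id' x).fun_pow 2).fun_neg.div_const (4 * t)).exp.div_const √t
  refine hexp.congr_deriv ?_
  unfold heatKernel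
  field_simp
  ring

theorem hasDerivAt_heatKernel_time (x : ℝ) :
    HasDerivAt (heatKernel x ·) ((x ^ 2 / (4 * t ^ 2) - 1 / (2 * t)) * heatKernel x t) t := by
  have hexp := ((hasDerivAt_const t (-x ^ 2)).fun_div ((hasDerivAt_id' t).const_mul 4)
    (by positivity)).exp.fun_div (hasDerivAt_sqrt ht.ne') (sqrt_pos.mpr ht).ne'
  refine hexp.congr_deriv ?_
  unfold heatKernel
  have hsq : √t ^ 2 = t := sq_sqrt ht.le
  field_simp
  rw [hsq]
  ring

theorem isHeatSolutionAt_heatKernel : IsHeatSolutionAt heatKernel t := by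
  refine ⟨fun x => -x / (2 * t) * heatKernel x t,
    fun x => (x ^ 2 / (4 * t ^ 2) - 1 / (2 * t)) * heatKernel x t, fun x =>
    ⟨hasDerivAt_heatKernel_space ht x, ?_, hasDerivAt_heatKernel_time ht x⟩⟩
  refine (((hasDerivAt_id' x).fun_neg.div_const (2 * t)).fun_mul
    (hasDerivAt_heatKernel_space ht x)).congr_deriv ?_
  field_simp
  ring

end HeatKernel

section ErfcSolution

variable {t : ℝ} (ht : 0 < t)
include ht

theorem W_div_two_sqrt (x a : ℝ) :
    W (x / (2 * √t)) (a * √t) = exp (a * x + a ^ 2 * t) * erfc (x / (2 * √t) + a * √t) := by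
  have hs : √t ≠ 0 := (sqrt_pos.mpr ht).ne'
  rw [W]
  congr 2
  field_simp
  rw [sq_sqrt ht.le]
  ring

theorem heatKernel_eq_exp_mul_exp_neg_sq (x a : ℝ) :
    heatKernel x t = exp (a * x + a ^ 2 * t) * exp (-(x / (2 * √t) + a * √t) ^ 2) / √t := by
  have hs : √t ≠ 0 := (sqrt_pos.mpr ht).ne'
  rw [heatKernel, ← exp_add]
  congr 2
  field_simp
  rw [sq_sqrt ht.le]
  ring

theorem hasDerivAt_W_space (x a : ℝ) :
    HasDerivAt (fun y => W (y / (2 * √t)) (a * √t))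
      (a * W (x / (2 * √t)) (a * √t) - heatKernel x t / √π) x := by
  simp only [W_div_two_sqrt ht]
  have hz : HasDerivAt (fun y => y / (2 * √t) + a * √t) (1 / (2 * √t)) x :=
    ((hasDerivAt_id' x).div_const _).add_const _
  refine ((((hasDerivAt_id' x).const_mul a).add_const (a ^ 2 * t)).exp.fun_mul
    ((hasDerivAt_erfc _).comp x hz)).congr_deriv ?_
  rw [Function.comp_apply, heatKernel_eq_exp_mul_exp_neg_sq ht x a]
  have hs : √t ≠ 0 := (sqrt_pos.mpr ht).ne'
  field_simp
  ring

theorem hasDerivAt_W_time (x a : ℝ) :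
    HasDerivAt (fun s => W (x / (2 * √s)) (a * √s))
      (a ^ 2 * W (x / (2 * √t)) (a * √t) + (x / (2 * t) - a) * heatKernel x t / √π) t := by
  have heq : (fun s => W (x / (2 * √s)) (a * √s))
      =ᶠ[nhds t] fun s => exp (a * x + a ^ 2 * s) * erfc (x / (2 * √s) + a * √s) := by
    filter_upwards [lt_mem_nhds ht] with s hs using W_div_two_sqrt hs x a
  have hs : √t ≠ 0 := (sqrt_pos.mpr ht).ne'
  have hsqrt := hasDerivAt_sqrt ht.ne'
  have hz := ((hasDerivAt_const t x).fun_div (hsqrt.const_mul 2) (by positivity)).fun_add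
    (hsqrt.const_mul a)
  refine ((((hasDerivAt_id' t).const_mul (a ^ 2)).const_add (a * x)).exp.fun_mul
    ((hasDerivAt_erfc _).comp t hz)).congr_of_eventuallyEq heq |>.congr_deriv ?_
  rw [Function.comp_apply, W_div_two_sqrt ht, heatKernel_eq_exp_mul_exp_neg_sq ht x a]
  generalize exp (a * x + a ^ 2 * t) = E
  generalize erfc (x / (2 * √t) + a * √t) = F
  generalize exp (-(x / (2 * √t) + a * √t) ^ 2) = G
  have hst := sq_sqrt ht.le
  generalize √t = s at hs hst ⊢
  subst hst
  field_simp
  ring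

theorem isHeatSolutionAt_W (a : ℝ) :
    IsHeatSolutionAt (fun x t => W (x / (2 * √t)) (a * √t)) t := by
  refine ⟨fun x => a * W (x / (2 * √t)) (a * √t) - heatKernel x t / √π,
    fun x => a * (a * W (x / (2 * √t)) (a * √t) - heatKernel x t / √π)
      + x / (2 * t) * heatKernel x t / √π, fun x =>
    ⟨hasDerivAt_W_space ht x a, ?_, (hasDerivAt_W_time ht x a).congr_deriv (by ring)⟩⟩
  exact (((hasDerivAt_W_space ht x a).const_mul a).fun_sub
    ((hasDerivAt_heatKernel_space ht x).div_const √π)).congr_deriv (by ring)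

end ErfcSolution

noncomputable def greenNumerator (r0 α β γ : ℝ) : ℝ → ℝ → ℝ := fun x t =>
  1 / (8 * π * r0 * √π) * (heatKernel (x - r0) t + heatKernel (x - (2 - r0)) t)
    - 1 / (4 * π * r0) * (eta1 α β γ * W ((x - (2 - r0)) / (2 * √t)) (α * √t)
      + eta2 α β γ * W ((x - (2 - r0)) / (2 * √t)) (β * √t)
      + eta3 α β γ * W ((x - (2 - r0)) / (2 * √t)) (γ * √t))

theorem greenP_eq (k_d r0 α β γ r t : ℝ) :
    greenP k_d r0 α β γ r t = exp (-k_d * t) * greenNumerator r0 α β γ r t / r := by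
  rw [greenP, greenNumerator, heatKernel, heatKernel, sqrt_mul pi_pos.le,
    show r + r0 - 2 = r - (2 - r0) by ring]
  ring

theorem isHeatSolutionAt_greenNumerator (r0 α β γ : ℝ) {t : ℝ} (ht : 0 < t) :
    IsHeatSolutionAt (greenNumerator r0 α β γ) t := by
  have hG (c : ℝ) := (isHeatSolutionAt_heatKernel ht).comp_sub_const c
  have hW (a : ℝ) := ((isHeatSolutionAt_W ht a).comp_sub_const (2 - r0)).const_mul
  exact (((hG r0).add (hG (2 - r0))).const_mul _).sub
    ((((hW α _).add (hW β _)).add (hW γ _)).const_mul _)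

theorem greenP_satisfies_radial_reaction_diffusion_general
    (k_d : ℝ)
    (α β γ : ℝ)
    (r0 : ℝ) :
    ∀ r t : ℝ, 1 < r → 0 < t →
      deriv (fun t' : ℝ => greenP k_d r0 α β γ r t') t
        = deriv (fun r' : ℝ => deriv (fun r'' : ℝ => greenP k_d r0 α β γ r'' t) r') r
          + (2 / r) * deriv (fun r' : ℝ => greenP k_d r0 α β γ r' t) r
          - k_d * greenP k_d r0 α β γ r t := by
  intro r t hr ht
  simp only [greenP_eq]
  exact (isHeatSolutionAt_greenNumerator r0 α β γ ht).radial_reaction_diffusion k_d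
    (zero_lt_one.trans hr).ne'

/-- (PDE part of Theorem 1.) If `k_f, k_b, k_d ≥ 0`, `α, β, γ` are pairwise distinct reals
satisfying the characteristic system, and `r0 > 1`, then the Green's function satisfies
`∂P/∂t = ∂²P/∂r² + (2/r)·∂P/∂r − k_d·P` for all `r > 1` and `t > 0`. -/
theorem greenP_satisfies_radial_reaction_diffusion
    (k_f k_b k_d : ℝ) (hkf : 0 ≤ k_f) (hkb : 0 ≤ k_b) (hkd : 0 ≤ k_d)
    (α β γ : ℝ) (hαβ : α ≠ β) (hβγ : β ≠ γ) (hαγ : α ≠ γ)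
    (hsum : α + β + γ = 1 + k_f / (4 * Real.pi))
    (hprod2 : α * γ + β * γ + α * β = k_b - k_d)
    (hprod3 : α * β * γ = k_b - k_d * (1 + k_f / (4 * Real.pi)))
    (r0 : ℝ) (hr0 : 1 < r0) :
    ∀ r t : ℝ, 1 < r → 0 < t →
      deriv (fun t' : ℝ => greenP k_d r0 α β γ r t') t
        = deriv (fun r' : ℝ => deriv (fun r'' : ℝ => greenP k_d r0 α β γ r'' t) r') r
          + (2 / r) * deriv (fun r' : ℝ => greenP k_d r0 α β γ r' t) r
          - k_d * greenP k_d r0 α β γ r t :=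
  greenP_satisfies_radial_reaction_diffusion_general k_d α β γ r0
end

section
/- (Corollary 3: asymptotic value of the impulse response without backward reaction and degradation.) Let k_f > 0 and r0 > 1, and set α = 1 + k_f/(4π). Then the channel impulse response P_AC(t) = (1/r0)·(k_f/(k_f+4π))·( erfc((r0−1)/(2√t)) − W((r0−1)/(2√t), α·√t) ) converges, as t → ∞, to the steady-state value (1/r0)·k_f/(k_f + 4π). -/
open Filter Topology

/-! Writing `W(n, m) = exp(−n²) · exp((n+m)²) erfc(n+m)`, the second factor is bounded by
`1/(√π (n+m))` (compare `exp(−u²)` with `(u/x) exp(−u²)` on `(x, ∞)`), so `W(n, m) → 0`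
as `n + m → ∞`. With `n = (r0−1)/(2√t) → 0` and `m = α√t → ∞`, the `erfc` term tends to
`erfc 0 = 1` by continuity and the `W` term vanishes. -/

open MeasureTheory Real Set

lemma integrableOn_exp_neg_sq_Ioi (x : ℝ) :
    IntegrableOn (fun u : ℝ => exp (-u ^ 2)) (Ioi x) := by
  simpa using (integrable_exp_neg_mul_sq one_pos).integrableOn (s := Ioi x)

lemma integrableOn_mul_exp_neg_sq_Ioi (x : ℝ) :
    IntegrableOn (fun u : ℝ => u * exp (-u ^ 2)) (Ioi x) := by
  simpa using (integrable_mul_exp_neg_mul_sq one_pos).integrableOn (s := Ioi x)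

lemma erfc_nonneg (x : ℝ) : 0 ≤ erfc x :=
  mul_nonneg (by positivity) (setIntegral_nonneg measurableSet_Ioi fun u _ => (exp_pos _).le)

lemma erfc_zero : erfc 0 = 1 := by
  have hπ : √π ≠ 0 := by positivity
  rw [erfc, show (∫ u in Ioi (0 : ℝ), exp (-u ^ 2)) = √π / 2 by
    simpa using integral_gaussian_Ioi 1]
  field_simp

lemma erfc_eq_one_sub_integral (x : ℝ) :
    erfc x = 1 - 2 / √π * ∫ u in (0 : ℝ)..x, exp (-u ^ 2) := by
  rw [← erfc_zero, erfc, erfc, ← intervalIntegral.integral_interval_add_Ioi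
    (integrableOn_exp_neg_sq_Ioi 0) (integrableOn_exp_neg_sq_Ioi x)]
  ring

lemma continuous_erfc : Continuous erfc := by
  simp only [funext erfc_eq_one_sub_integral]
  have hf : Continuous fun u : ℝ => exp (-u ^ 2) := by fun_prop
  exact continuous_const.sub
    (continuous_const.mul (intervalIntegral.continuous_primitive
      (fun a b => hf.intervalIntegrable a b) 0))

lemma integral_Ioi_mul_exp_neg_sq (x : ℝ) :
    ∫ u in Ioi x, u * exp (-u ^ 2) = exp (-x ^ 2) / 2 := by
  have hderiv :
      ∀ u ∈ Ici x, HasDerivAt (fun u : ℝ => -exp (-u ^ 2) / 2) (u * exp (-u ^ 2)) u := by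
    intro u _
    refine (((hasDerivAt_pow 2 u).fun_neg).exp).fun_neg.div_const 2 |>.congr_deriv ?_
    norm_num
    ring
  have hlim : Tendsto (fun u : ℝ => -exp (-u ^ 2) / 2) atTop (𝓝 0) := by
    simpa using ((tendsto_exp_atBot.comp
      (tendsto_neg_atTop_atBot.comp (tendsto_pow_atTop two_ne_zero))).neg.div_const 2)
  rw [integral_Ioi_of_hasDerivAt_of_tendsto' hderiv (integrableOn_mul_exp_neg_sq_Ioi x) hlim]
  ring

lemma exp_sq_mul_erfc_le {x : ℝ} (hx : 0 < x) : exp (x ^ 2) * erfc x ≤ 1 / (√π * x) := by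
  have hgauss : ∫ u in Ioi x, exp (-u ^ 2) ≤ exp (-x ^ 2) / (2 * x) := by
    calc ∫ u in Ioi x, exp (-u ^ 2)
        ≤ ∫ u in Ioi x, u * exp (-u ^ 2) / x := by
          refine setIntegral_mono_on (integrableOn_exp_neg_sq_Ioi x)
            ((integrableOn_mul_exp_neg_sq_Ioi x).div_const x) measurableSet_Ioi fun u hu => ?_
          rw [le_div_iff₀ hx, mul_comm]
          exact mul_le_mul_of_nonneg_right hu.le (exp_pos _).le
      _ = exp (-x ^ 2) / (2 * x) := by
          rw [integral_div, integral_Ioi_mul_exp_neg_sq]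
          ring
  have hπ : 0 < √π := sqrt_pos.2 pi_pos
  calc exp (x ^ 2) * erfc x
      ≤ exp (x ^ 2) * (2 / √π * (exp (-x ^ 2) / (2 * x))) :=
        mul_le_mul_of_nonneg_left (mul_le_mul_of_nonneg_left hgauss (by positivity)) (exp_pos _).le
    _ = 1 / (√π * x) := by
        rw [show exp (x ^ 2) * (2 / √π * (exp (-x ^ 2) / (2 * x)))
          = exp (x ^ 2) * exp (-x ^ 2) / (√π * x) by field_simp, ← exp_add]
        simp

lemma tendsto_exp_sq_mul_erfc_atTop :
    Tendsto (fun x => exp (x ^ 2) * erfc x) atTop (𝓝 0) := by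
  have hπ : 0 < √π := sqrt_pos.2 pi_pos
  refine tendsto_of_tendsto_of_tendsto_of_le_of_le' tendsto_const_nhds
    ((tendsto_const_nhds (x := (1 : ℝ))).div_atTop (tendsto_id.const_mul_atTop hπ))
    (Eventually.of_forall fun x => mul_nonneg (exp_pos _).le (erfc_nonneg x)) ?_
  filter_upwards [eventually_gt_atTop 0] with x hx using exp_sq_mul_erfc_le hx

lemma W_eq_exp_mul_exp_sq_mul_erfc (n m : ℝ) :
    W n m = exp (-n ^ 2) * (exp ((n + m) ^ 2) * erfc (n + m)) := by
  rw [W, ← mul_assoc, ← exp_add]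
  congr 2
  ring

lemma tendsto_W_of_tendsto_add_atTop {α : Type*} {l : Filter α} {n m : α → ℝ}
    (h : Tendsto (fun a => n a + m a) l atTop) :
    Tendsto (fun a => W (n a) (m a)) l (𝓝 0) := by
  have hE : ∀ a, 0 ≤ exp ((n a + m a) ^ 2) * erfc (n a + m a) := fun a =>
    mul_nonneg (exp_pos _).le (erfc_nonneg _)
  refine tendsto_of_tendsto_of_tendsto_of_le_of_le tendsto_const_nhds
    (tendsto_exp_sq_mul_erfc_atTop.comp h) (fun a => ?_) (fun a => ?_) <;>
    simp only [Function.comp_apply, W_eq_exp_mul_exp_sq_mul_erfc]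
  · exact mul_nonneg (exp_pos _).le (hE a)
  · exact mul_le_of_le_one_left (hE a) (exp_le_one_iff.2 (neg_nonpos.2 (sq_nonneg _)))

theorem impulse_response_steady_state_value_general
    (k_f r0 : ℝ) (hkf : 0 < k_f) :
    Tendsto (fun t : ℝ =>
        (1 / r0) * (k_f / (k_f + 4 * Real.pi)) *
          (erfc ((r0 - 1) / (2 * Real.sqrt t))
            - W ((r0 - 1) / (2 * Real.sqrt t)) ((1 + k_f / (4 * Real.pi)) * Real.sqrt t)))
      atTop
      (𝓝 ((1 / r0) * k_f / (k_f + 4 * Real.pi))) := by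
  have hn : Tendsto (fun t : ℝ => (r0 - 1) / (2 * √t)) atTop (𝓝 0) :=
    tendsto_const_nhds.div_atTop (tendsto_sqrt_atTop.const_mul_atTop two_pos)
  have hm : Tendsto (fun t : ℝ => (1 + k_f / (4 * π)) * √t) atTop atTop :=
    tendsto_sqrt_atTop.const_mul_atTop (by positivity)
  have herfc := (continuous_erfc.tendsto' 0 1 erfc_zero).comp hn
  have hW := tendsto_W_of_tendsto_add_atTop (hn.add_atTop hm)
  rw [show 1 / r0 * k_f / (k_f + 4 * π) = 1 / r0 * (k_f / (k_f + 4 * π)) * (1 - 0) by ring]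
  exact (herfc.sub hW).const_mul _

/-- (Corollary 3: asymptotic value of the impulse response without backward reaction and
degradation.) For `k_f > 0`, `r0 > 1`, and `α = 1 + k_f/(4π)`, the channel impulse response
`P_AC(t) = (1/r0)·(k_f/(k_f+4π))·( erfc((r0−1)/(2√t)) − W((r0−1)/(2√t), α·√t) )` converges,
as `t → ∞`, to the steady-state value `(1/r0)·k_f/(k_f + 4π)`. -/
theorem impulse_response_steady_state_value
    (k_f r0 : ℝ) (hkf : 0 < k_f) (hr0 : 1 < r0) :
    Tendsto (fun t : ℝ =>
        (1 / r0) * (k_f / (k_f + 4 * Real.pi)) *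
          (erfc ((r0 - 1) / (2 * Real.sqrt t))
            - W ((r0 - 1) / (2 * Real.sqrt t)) ((1 + k_f / (4 * Real.pi)) * Real.sqrt t)))
      atTop
      (𝓝 ((1 / r0) * k_f / (k_f + 4 * Real.pi))) :=
  impulse_response_steady_state_value_general k_f r0 hkf
end
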